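/- Let n be a power of 2, ω = e^{2πi/n}, and define the Fourier transform by x̂_f = (1/√n) Σ_{i∈[n]} ω^{-if} x_i. For σ odd (so invertible mod n) and a, q ∈ [n], define the permutation operator (P_{σ,a,q} x̂)_i = x̂_{σ(i-a)} · ω^{iσq}, and the index permutation π_{σ,q}(i) = σ(i-q) mod n. Then for every x ∈ ℂ^n and every i ∈ [n], the inverse Fourier transform satisfies F^{-1}(P_{σ,a,q} x̂)_{π_{σ,q}(i)} = x_i · ω^{aσi}. -/

import Mathlib

open Complex

/-- The (orthonormal) discrete Fourier transform `x̂_f = (1/√n) ∑_i ω^{-if} x_i`. -/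
noncomputable def dft (n : ℕ) [NeZero n] (x : ZMod n → ℂ) : ZMod n → ℂ :=
  fun f => (1 / (Real.sqrt n : ℂ)) *
    ∑ i : ZMod n, Complex.exp (-2 * Real.pi * Complex.I * ((i.val : ℂ) * (f.val : ℂ)) / n) * x i

/-- The inverse transform `x_j = (1/√n) ∑_f ω^{jf} x̂_f`. -/
noncomputable def idft (n : ℕ) [NeZero n] (xh : ZMod n → ℂ) : ZMod n → ℂ :=
  fun j => (1 / (Real.sqrt n : ℂ)) *
    ∑ f : ZMod n, Complex.exp (2 * Real.pi * Complex.I * ((j.val : ℂ) * (f.val : ℂ)) / n) * xh f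

/-- The spectrum permutation `(P_{σ,a,q} x̂)_i = x̂_{σ(i-a)} · ω^{iσq}`. -/
noncomputable def Pperm (n : ℕ) [NeZero n] (σ a q : ZMod n) (xh : ZMod n → ℂ) :
    ZMod n → ℂ :=
  fun i => xh (σ * (i - a)) *
    Complex.exp (2 * Real.pi * Complex.I * (((i * σ * q : ZMod n).val : ℂ)) / n)

/-! In terms of the character `ZMod.stdAddChar k = ω^k`, the transforms `dft` and `idft` are
rescalings of Mathlib's `ZMod.dft` and its inverse, so Fourier inversion comes from the library.
In `idft (P_{σ,a,q} x̂)` at `σ(i-q)` the modulation `ω^{fσq}` cancels the shift by `q`, leaving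
`ω^{σif} x̂_{σ(f-a)}`; since `σ` is a unit, `g = σ(f-a)` is a bijective change of variables and
`ω^{σif} = ω^{aσi} ω^{ig}`, so the sum is `ω^{aσi}` times `idft x̂` at `i`, i.e. `ω^{aσi} x_i`. -/

open ZMod (stdAddChar stdAddChar_apply toCircle_apply toCircle_natCast natCast_zmod_val
  dft_apply invDFT_apply isUnit_iff_coprime)
open scoped ZMod

section Fourier

variable {n : ℕ} [NeZero n]

lemma exp_val_eq_stdAddChar (w : ZMod n) :
    Complex.exp (2 * Real.pi * Complex.I * (w.val : ℂ) / n) = stdAddChar w := by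
  rw [stdAddChar_apply, toCircle_apply]

lemma exp_val_mul_val_eq_stdAddChar (u v : ZMod n) :
    Complex.exp (2 * Real.pi * Complex.I * ((u.val : ℂ) * (v.val : ℂ)) / n)
      = stdAddChar (u * v) := by
  have hprod : u * v = ((u.val * v.val : ℕ) : ZMod n) := by
    rw [Nat.cast_mul, natCast_zmod_val, natCast_zmod_val]
  rw [hprod, stdAddChar_apply, toCircle_natCast, Nat.cast_mul]

lemma exp_neg_val_mul_val_eq_stdAddChar (u v : ZMod n) :
    Complex.exp (-2 * Real.pi * Complex.I * ((u.val : ℂ) * (v.val : ℂ)) / n)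
      = stdAddChar (-(u * v)) := by
  rw [AddChar.map_neg_eq_inv, ← exp_val_mul_val_eq_stdAddChar, ← Complex.exp_neg]
  ring_nf

lemma sqrt_natCast_ne_zero : (Real.sqrt n : ℂ) ≠ 0 := by
  exact_mod_cast (Real.sqrt_pos.2 (Nat.cast_pos.2 (NeZero.pos n))).ne'

lemma dft_eq_smul_zmodDFT (x : ZMod n → ℂ) : dft n x = (Real.sqrt n : ℂ)⁻¹ • 𝓕 x := by
  ext f
  simp only [dft, exp_neg_val_mul_val_eq_stdAddChar, one_div, Pi.smul_apply, dft_apply,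
    smul_eq_mul]

lemma idft_eq_smul_zmodInvDFT (xh : ZMod n → ℂ) : idft n xh = (Real.sqrt n : ℂ) • 𝓕⁻ xh := by
  ext j
  have hsqrt : (Real.sqrt n : ℂ) * (Real.sqrt n : ℂ) = n := by
    exact_mod_cast Real.mul_self_sqrt (Nat.cast_nonneg n)
  have hscalar : 1 / (Real.sqrt n : ℂ) = Real.sqrt n * (n : ℂ)⁻¹ := by
    rw [← hsqrt]
    field_simp [sqrt_natCast_ne_zero]
  simp only [idft, exp_val_mul_val_eq_stdAddChar, Pi.smul_apply, invDFT_apply, smul_eq_mul,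
    hscalar, mul_comm j]
  ring

theorem idft_dft (x : ZMod n → ℂ) : idft n (dft n x) = x := by
  rw [idft_eq_smul_zmodInvDFT, dft_eq_smul_zmodDFT, _root_.map_smul, smul_smul,
    mul_inv_cancel₀ sqrt_natCast_ne_zero, one_smul, LinearEquiv.symm_apply_apply]

lemma Pperm_apply (σ a q : ZMod n) (xh : ZMod n → ℂ) (f : ZMod n) :
    Pperm n σ a q xh f = xh (σ * (f - a)) * stdAddChar (f * σ * q) := by
  rw [Pperm, exp_val_eq_stdAddChar]

theorem idft_Pperm_apply {σ : ZMod n} (hσ : IsUnit σ) (a q : ZMod n) (xh : ZMod n → ℂ)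
    (i : ZMod n) :
    idft n (Pperm n σ a q xh) (σ * (i - q)) = stdAddChar (a * σ * i) * idft n xh i := by
  simp only [idft, Pperm_apply, exp_val_mul_val_eq_stdAddChar]
  rw [mul_left_comm]
  congr 1
  rw [Finset.mul_sum]
  -- substitute `g = σ (f - a)`
  refine Fintype.sum_equiv ((Equiv.subRight a).trans hσ.unit.mulLeft) _ _ fun f => ?_
  simp only [Equiv.trans_apply, Equiv.subRight_apply, Units.mulLeft_apply, IsUnit.unit_spec]
  have hphase : σ * (i - q) * f + f * σ * q = a * σ * i + i * (σ * (f - a)) := by ring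
  calc stdAddChar (σ * (i - q) * f) * (xh (σ * (f - a)) * stdAddChar (f * σ * q))
      = stdAddChar (σ * (i - q) * f + f * σ * q) * xh (σ * (f - a)) := by
        rw [AddChar.map_add_eq_mul]; ring
    _ = stdAddChar (a * σ * i) * (stdAddChar (i * (σ * (f - a))) * xh (σ * (f - a))) := by
        rw [hphase, AddChar.map_add_eq_mul]; ring

end Fourier

lemma isUnit_of_odd_val {n : ℕ} (hn : ∃ k, n = 2 ^ k) {σ : ZMod n} (hσ : Odd σ.val) :
    IsUnit σ := by
  obtain ⟨k, rfl⟩ := hn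
  simpa using (isUnit_iff_coprime σ.val (2 ^ k)).2 (hσ.coprime_two_right.pow_right k)

/-- Pseudorandom spectrum permutation in time domain: for `n` a power of two and
`σ` odd, `F⁻¹(P_{σ,a,q} x̂)_{π_{σ,q}(i)} = x_i · ω^{aσi}` where `π_{σ,q}(i) = σ(i-q)`. -/
theorem idft_Pperm (n : ℕ) [NeZero n] (hn : ∃ k, n = 2 ^ k)
    (σ a q : ZMod n) (hσ : Odd σ.val) (x : ZMod n → ℂ) (i : ZMod n) :
    idft n (Pperm n σ a q (dft n x)) (σ * (i - q))
      = x i * Complex.exp (2 * Real.pi * Complex.I * (((a * σ * i : ZMod n).val : ℂ)) / n) := by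
  rw [idft_Pperm_apply (isUnit_of_odd_val hn hσ), idft_dft, exp_val_eq_stdAddChar, mul_comm]
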